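/- If ξ ∈ ℝ^m is a standard Gaussian random vector and 1 ≤ p < ∞, then E‖ξ‖_p ≥ (E‖ξ‖_p^p)^(1/p) · (1 + 2^(p+1)/m)^(1/p - 1). In particular, if m ≥ β^(-1) 2^(p+1) for some β ≥ 0, then E‖ξ‖_p ≥ (E‖ξ‖_p^p)^(1/p) (1+β)^(1/p - 1) ≥ (E‖ξ‖_p^p)^(1/p) (1 - ((p-1)/p)β). -/

import Mathlib

open MeasureTheory ProbabilityTheory Real Set
open scoped ENNReal NNReal

lemma aux_Gamma_add_le {x s : ℝ} (hx : 0 < x) (hs0 : 0 ≤ s) (hs1 : s ≤ 1) :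
    Real.Gamma (x + s) ≤ Real.Gamma x * x ^ s := by
  have h := Real.convexOn_log_Gamma.2 (Set.mem_Ioi.mpr hx)
    (Set.mem_Ioi.mpr (by linarith : (0:ℝ) < x + 1)) (by linarith : (0:ℝ) ≤ 1 - s) hs0 (by ring)
  simp only [Function.comp_apply, smul_eq_mul] at h
  have hxs : (1 - s) * x + s * (x + 1) = x + s := by ring
  rw [hxs] at h
  have h1 : Real.Gamma (x + 1) = x * Real.Gamma x := Real.Gamma_add_one hx.ne'
  have hGx : 0 < Real.Gamma x := Real.Gamma_pos_of_pos hx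
  have hGxs : 0 < Real.Gamma (x + s) := Real.Gamma_pos_of_pos (by linarith)
  have hrhs : (0:ℝ) < Real.Gamma x * x ^ s := by positivity
  rw [← Real.log_le_log_iff hGxs hrhs, Real.log_mul hGx.ne' (by positivity), Real.log_rpow hx]
  calc Real.log (Real.Gamma (x+s))
      ≤ (1-s) * Real.log (Real.Gamma x) + s * Real.log (Real.Gamma (x+1)) := h
    _ = Real.log (Real.Gamma x) + s * Real.log x := by
        rw [h1, Real.log_mul hx.ne' hGx.ne']; ring

lemma aux_Gamma_ratio {p : ℝ} (hp : 1 ≤ p) :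
    Real.Gamma (p + 1/2) * Real.sqrt π ≤ (1 + 2 ^ (p+1)) * Real.Gamma ((p+1)/2) ^ 2 := by
  set x : ℝ := (p+1)/2 with hxdef
  have hx1 : (1:ℝ) ≤ x := by rw [hxdef]; linarith
  have hx0 : (0:ℝ) < x := by linarith
  have hdup := Real.Gamma_mul_Gamma_add_half (p/2 + 1/4)
  have e1 : p/2 + 1/4 + 1/2 = x + 1/4 := by rw [hxdef]; ring
  have e2 : 2 * (p/2 + 1/4) = p + 1/2 := by ring
  have e3 : (1:ℝ) - (p + 1/2) = 1/2 - p := by ring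
  rw [e1, e2, e3] at hdup
  have hxm : p/2 + 1/4 = x - 1/4 := by rw [hxdef]; ring
  rw [hxm] at hdup
  -- hdup : Γ(x-1/4) * Γ(x+1/4) = Γ(p+1/2) * 2^(1/2-p) * √π
  have hGx : 0 < Real.Gamma x := Real.Gamma_pos_of_pos hx0
  have hb1 : Real.Gamma (x + 1/4) ≤ Real.Gamma x * x ^ (1/4:ℝ) :=
    aux_Gamma_add_le hx0 (by norm_num) (by norm_num)
  have hb2 : Real.Gamma (x - 1/4) ≤ Real.Gamma x * x ^ (3/4:ℝ) / (x - 1/4) := by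
    have h34 : Real.Gamma (x + 3/4) ≤ Real.Gamma x * x ^ (3/4:ℝ) :=
      aux_Gamma_add_le hx0 (by norm_num) (by norm_num)
    have hq : 0 < x - 1/4 := by linarith
    have : Real.Gamma (x - 1/4 + 1) = (x - 1/4) * Real.Gamma (x - 1/4) :=
      Real.Gamma_add_one hq.ne'
    have e4 : x - 1/4 + 1 = x + 3/4 := by ring
    rw [e4] at this
    rw [le_div_iff₀ hq, mul_comm (Real.Gamma (x-1/4)) _, ← this]
    exact h34
  have hprod : Real.Gamma (x - 1/4) * Real.Gamma (x + 1/4)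
      ≤ Real.Gamma x ^ 2 * (4/3) := by
    have hG14 : 0 ≤ Real.Gamma (x - 1/4) := (Real.Gamma_pos_of_pos (by linarith)).le
    have hG14' : 0 ≤ Real.Gamma (x + 1/4) := (Real.Gamma_pos_of_pos (by linarith)).le
    calc Real.Gamma (x - 1/4) * Real.Gamma (x + 1/4)
        ≤ (Real.Gamma x * x ^ (3/4:ℝ) / (x - 1/4)) * (Real.Gamma x * x ^ (1/4:ℝ)) := by
          exact mul_le_mul hb2 hb1 hG14' (div_nonneg (by positivity) (by linarith))
      _ = Real.Gamma x ^ 2 * (x ^ (3/4:ℝ) * x ^ (1/4:ℝ)) / (x - 1/4) := by ring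
      _ = Real.Gamma x ^ 2 * x / (x - 1/4) := by
          rw [← Real.rpow_add hx0]; norm_num
      _ ≤ Real.Gamma x ^ 2 * (4/3) := by
          rw [div_le_iff₀ (by linarith : (0:ℝ) < x - 1/4)]
          nlinarith [sq_nonneg (Real.Gamma x)]
  -- from hdup : Γ(p+1/2) * √π = product * 2^(p - 1/2)
  have h2pos : (0:ℝ) < 2 ^ ((1:ℝ)/2 - p) := Real.rpow_pos_of_pos two_pos _
  have key : Real.Gamma (p+1/2) * Real.sqrt π
      = Real.Gamma (x - 1/4) * Real.Gamma (x + 1/4) * 2 ^ (p - 1/2 : ℝ) := by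
    have : Real.Gamma (p+1/2) * Real.sqrt π * (2 ^ ((1:ℝ)/2 - p) * 2 ^ (p - 1/2 : ℝ))
        = Real.Gamma (x - 1/4) * Real.Gamma (x + 1/4) * 2 ^ (p - 1/2 : ℝ) := by
      linear_combination (-(2:ℝ) ^ (p - 1/2 : ℝ)) * hdup
    rwa [← Real.rpow_add two_pos, (by ring : (1:ℝ)/2 - p + (p - 1/2) = 0), Real.rpow_zero,
      mul_one] at this
  rw [key]
  have h43 : Real.Gamma (x - 1/4) * Real.Gamma (x + 1/4) * 2 ^ (p - 1/2 : ℝ)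
      ≤ Real.Gamma x ^ 2 * (4/3) * 2 ^ (p - 1/2 : ℝ) := by
    apply mul_le_mul_of_nonneg_right hprod (Real.rpow_pos_of_pos two_pos _).le
  refine h43.trans ?_
  have hfin : (4/3 : ℝ) * 2 ^ (p - 1/2 : ℝ) ≤ 1 + 2 ^ (p+1:ℝ) := by
    have h1 : (2:ℝ) ^ (p - 1/2 : ℝ) * 2 ^ ((3:ℝ)/2) = 2 ^ (p+1:ℝ) := by
      rw [← Real.rpow_add two_pos]; congr 1; ring
    have h2 : (4/3 : ℝ) ≤ 2 ^ ((3:ℝ)/2) := by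
      calc (4/3:ℝ) ≤ 2 := by norm_num
        _ = 2 ^ (1:ℝ) := (Real.rpow_one 2).symm
        _ ≤ 2 ^ ((3:ℝ)/2) := Real.rpow_le_rpow_of_exponent_le one_le_two (by norm_num)
    calc (4/3 : ℝ) * 2 ^ (p - 1/2 : ℝ) ≤ 2 ^ ((3:ℝ)/2) * 2 ^ (p - 1/2 : ℝ) := by
          apply mul_le_mul_of_nonneg_right h2 (Real.rpow_pos_of_pos two_pos _).le
      _ = 2 ^ (p+1:ℝ) := by rw [mul_comm]; exact h1
      _ ≤ 1 + 2 ^ (p+1:ℝ) := by linarith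
  calc Real.Gamma x ^ 2 * (4/3) * 2 ^ (p - 1/2 : ℝ)
      = (4/3 * 2 ^ (p - 1/2 : ℝ)) * Real.Gamma x ^ 2 := by ring
    _ ≤ (1 + 2 ^ (p+1:ℝ)) * Real.Gamma x ^ 2 := by
        apply mul_le_mul_of_nonneg_right hfin (sq_nonneg _)

lemma aux_gauss_density (g : ℝ → ℝ) :
    ∫ x, g x ∂(gaussianReal 0 1) = ∫ x, gaussianPDFReal 0 1 x * g x := by
  rw [gaussianReal_of_var_ne_zero 0 one_ne_zero]
  have hmeas : Measurable fun x => (gaussianPDFReal 0 1 x).toNNReal :=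
    (measurable_gaussianPDFReal 0 1).real_toNNReal
  have hpdf : gaussianPDF 0 1 = fun x => ((gaussianPDFReal 0 1 x).toNNReal : ℝ≥0∞) := rfl
  rw [hpdf, integral_withDensity_eq_integral_smul hmeas]
  congr 1; funext x
  rw [NNReal.smul_def, smul_eq_mul, Real.coe_toNNReal _ (gaussianPDFReal_nonneg 0 1 x)]

lemma aux_gauss_integrable_iff (g : ℝ → ℝ) :
    Integrable g (gaussianReal 0 1) ↔
      Integrable (fun x => gaussianPDFReal 0 1 x * g x) volume := by
  rw [gaussianReal_of_var_ne_zero 0 one_ne_zero]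
  have hmeas : Measurable fun x => (gaussianPDFReal 0 1 x).toNNReal :=
    (measurable_gaussianPDFReal 0 1).real_toNNReal
  have hpdf : gaussianPDF 0 1 = fun x => ((gaussianPDFReal 0 1 x).toNNReal : ℝ≥0∞) := rfl
  rw [hpdf, integrable_withDensity_iff_integrable_smul hmeas]
  apply integrable_congr
  filter_upwards with x
  rw [NNReal.smul_def, smul_eq_mul, Real.coe_toNNReal _ (gaussianPDFReal_nonneg 0 1 x)]

lemma aux_pdf_eq (x : ℝ) :
    gaussianPDFReal 0 1 x = (Real.sqrt (2*π))⁻¹ * Real.exp (-(1/2) * x ^ 2) := by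
  simp only [gaussianPDFReal, NNReal.coe_one, mul_one, sub_zero]
  congr 1
  ring

lemma aux_integrable_rpow_exp {q : ℝ} (hq : 0 ≤ q) :
    Integrable (fun x : ℝ => |x| ^ q * Real.exp (-(1/2) * x ^ 2)) volume := by
  have h1 : Integrable (fun x : ℝ => Real.exp (-(1/2:ℝ) * x ^ 2)) volume :=
    integrable_exp_neg_mul_sq (by norm_num)
  have h2' : Integrable (fun x : ℝ => x ^ (⌈q⌉₊ : ℕ) * Real.exp (-(1/2:ℝ) * x ^ 2)) volume := by
    have := integrable_rpow_mul_exp_neg_mul_sq (by norm_num : (0:ℝ) < 1/2)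
      (s := (⌈q⌉₊ : ℝ)) (lt_of_lt_of_le neg_one_lt_zero (Nat.cast_nonneg _))
    have heq : (fun x : ℝ => x ^ ((⌈q⌉₊ : ℕ) : ℝ) * Real.exp (-(1/2:ℝ) * x ^ 2))
        = fun x : ℝ => x ^ (⌈q⌉₊ : ℕ) * Real.exp (-(1/2:ℝ) * x ^ 2) := by
      funext x; rw [Real.rpow_natCast]
    rwa [heq] at this
  have h2 : Integrable (fun x : ℝ => |x ^ (⌈q⌉₊ : ℕ) * Real.exp (-(1/2:ℝ) * x ^ 2)|) volume :=
    h2'.abs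
  have hbound : Integrable (fun x : ℝ => Real.exp (-(1/2:ℝ) * x ^ 2)
      + |x ^ (⌈q⌉₊ : ℕ) * Real.exp (-(1/2:ℝ) * x ^ 2)|) volume := h1.add h2
  refine hbound.mono' ?_ ?_
  · exact ((Measurable.pow measurable_abs measurable_const).mul
      (((measurable_id.pow_const 2).const_mul (-(1/2:ℝ))).exp)).aestronglyMeasurable
  · filter_upwards with x
    have hexp : (0:ℝ) < Real.exp (-(1/2:ℝ) * x ^ 2) := Real.exp_pos _
    have habs : (0:ℝ) ≤ |x| ^ q * Real.exp (-(1/2:ℝ) * x ^ 2) := by positivity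
    rw [Real.norm_eq_abs, abs_of_nonneg habs]
    have hb : |x| ^ q ≤ 1 + |x| ^ (⌈q⌉₊) := by
      rcases le_total (|x|) 1 with h | h
      · have : |x| ^ q ≤ 1 := Real.rpow_le_one (abs_nonneg x) h hq
        have : (0:ℝ) ≤ |x| ^ (⌈q⌉₊ : ℕ) := by positivity
        linarith [Real.rpow_le_one (abs_nonneg x) h hq]
      · have h1' : |x| ^ q ≤ |x| ^ ((⌈q⌉₊ : ℝ)) :=
          Real.rpow_le_rpow_of_exponent_le h (Nat.le_ceil q)
        rw [Real.rpow_natCast] at h1'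
        linarith
    calc |x| ^ q * Real.exp (-(1/2:ℝ) * x ^ 2)
        ≤ (1 + |x| ^ (⌈q⌉₊)) * Real.exp (-(1/2:ℝ) * x ^ 2) :=
          mul_le_mul_of_nonneg_right hb hexp.le
      _ = Real.exp (-(1/2:ℝ) * x ^ 2) + |x| ^ (⌈q⌉₊) * Real.exp (-(1/2:ℝ) * x ^ 2) := by ring
      _ ≤ Real.exp (-(1/2:ℝ) * x ^ 2) + |x ^ (⌈q⌉₊) * Real.exp (-(1/2:ℝ) * x ^ 2)| := by
          rw [abs_mul, abs_of_nonneg hexp.le, abs_pow]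

lemma aux_gaussian_integrable {q : ℝ} (hq : 0 ≤ q) :
    Integrable (fun x : ℝ => |x| ^ q) (gaussianReal 0 1) := by
  rw [aux_gauss_integrable_iff]
  have : (fun x : ℝ => gaussianPDFReal 0 1 x * |x| ^ q)
      = fun x => (Real.sqrt (2*π))⁻¹ * (|x| ^ q * Real.exp (-(1/2) * x ^ 2)) := by
    funext x; rw [aux_pdf_eq]; ring
  rw [this]
  exact (aux_integrable_rpow_exp hq).const_mul _

lemma aux_gaussian_moment {q : ℝ} (hq : 0 ≤ q) :
    ∫ x, |x| ^ q ∂(gaussianReal 0 1)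
      = 2 ^ (q/2) * Real.Gamma ((q+1)/2) / Real.sqrt π := by
  rw [aux_gauss_density]
  have h1 : (fun x : ℝ => gaussianPDFReal 0 1 x * |x| ^ q)
      = fun x => (Real.sqrt (2*π))⁻¹ * (|x| ^ q * Real.exp (-(1/2) * |x| ^ 2)) := by
    funext x; rw [aux_pdf_eq, sq_abs]; ring
  rw [h1, integral_const_mul]
  rw [integral_comp_abs (f := fun t => t ^ q * Real.exp (-(1/2) * t ^ 2))]
  have h2 : ∫ t in Ioi (0:ℝ), t ^ q * Real.exp (-(1/2) * t ^ 2)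
      = ((1/2:ℝ)) ^ (-(q+1)/2) * (1/2) * Real.Gamma ((q+1)/2) := by
    rw [← integral_rpow_mul_exp_neg_mul_rpow two_pos (by linarith : (-1:ℝ) < q)
      (by norm_num : (0:ℝ) < 1/2)]
    refine setIntegral_congr_fun measurableSet_Ioi (fun t ht => ?_)
    have h2r : t ^ (2:ℝ) = t ^ (2:ℕ) := by
      rw [show (2:ℝ) = ((2:ℕ):ℝ) by norm_num, Real.rpow_natCast]
    rw [h2r]
  rw [h2]
  have h3 : ((1/2:ℝ)) ^ (-(q+1)/2 : ℝ) = 2 ^ ((q+1)/2 : ℝ) := by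
    rw [one_div, Real.inv_rpow (by norm_num : (0:ℝ) ≤ 2),
      ← Real.rpow_neg (by norm_num : (0:ℝ) ≤ 2)]
    congr 1; ring
  have h4 : (2:ℝ) ^ ((q+1)/2 : ℝ) = 2 ^ (q/2 : ℝ) * 2 ^ ((1:ℝ)/2) := by
    rw [← Real.rpow_add two_pos]; congr 1; ring
  have hπ : (0:ℝ) < Real.sqrt π := Real.sqrt_pos.mpr Real.pi_pos
  have h2r : (0:ℝ) < (2:ℝ) ^ ((1:ℝ)/2) := Real.rpow_pos_of_pos two_pos _
  rw [h3, Real.sqrt_mul (by norm_num : (0:ℝ) ≤ 2), Real.sqrt_eq_rpow, h4]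
  field_simp

lemma aux_holder_arith {E A Q c θ : ℝ} (hE : 0 < E) (hA : 0 ≤ A) (hQ : 0 ≤ Q)
    (hc : 0 < c) (hθ : 0 < θ) (hθ1 : θ < 1)
    (hH : E ≤ A ^ ((1:ℝ)/(2-θ)) * Q ^ ((1:ℝ)/((2-θ)/(1-θ))))
    (hQle : Q ≤ E^2 * c) :
    E ^ θ * c ^ (θ - 1) ≤ A := by
  set r : ℝ := 2 - θ with hr
  set r' : ℝ := (2-θ)/(1-θ) with hr'
  have hrpos : 0 < r := by rw [hr]; linarith
  have hr'pos : 0 < r' := by rw [hr']; exact div_pos (by linarith) (by linarith)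
  have hEc : (0:ℝ) < E^2 * c := by positivity
  have h2 : Q ^ ((1:ℝ)/r') ≤ (E^2*c) ^ ((1:ℝ)/r') :=
    Real.rpow_le_rpow hQ hQle (by positivity)
  have hB : (0:ℝ) ≤ A ^ ((1:ℝ)/r) := Real.rpow_nonneg hA _
  have h3 : E ≤ A ^ ((1:ℝ)/r) * (E^2*c) ^ ((1:ℝ)/r') :=
    hH.trans (mul_le_mul_of_nonneg_left h2 hB)
  have hxpos : (0:ℝ) < (E^2*c) ^ ((1:ℝ)/r') := Real.rpow_pos_of_pos hEc _
  have hDB : E / (E^2*c) ^ ((1:ℝ)/r') ≤ A ^ ((1:ℝ)/r) := by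
    rw [div_le_iff₀ hxpos]; exact h3
  have hDpos : 0 < E / (E^2*c) ^ ((1:ℝ)/r') := div_pos hE hxpos
  have hmono : (E / (E^2*c) ^ ((1:ℝ)/r')) ^ r ≤ (A ^ ((1:ℝ)/r)) ^ r :=
    Real.rpow_le_rpow hDpos.le hDB hrpos.le
  have hApow : (A ^ ((1:ℝ)/r)) ^ r = A := by
    rw [← Real.rpow_mul hA, one_div, inv_mul_cancel₀ hrpos.ne', Real.rpow_one]
  rw [hApow] at hmono
  refine le_trans (le_of_eq ?_) hmono
  -- E^θ * c^(θ-1) = (E / (E²c)^(1/r'))^r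
  rw [Real.div_rpow hE.le hxpos.le]
  rw [← Real.rpow_mul hEc.le]
  have he1 : (1:ℝ)/r' * r = 1 - θ := by
    rw [hr', hr]; field_simp; exact mul_div_cancel_left₀ _ (ne_of_gt (by linarith))
  rw [he1]
  rw [Real.mul_rpow (by positivity : (0:ℝ) ≤ E^2) hc.le]
  rw [← Real.rpow_natCast E 2, ← Real.rpow_mul hE.le]
  rw [eq_div_iff (by positivity : E ^ (((2:ℕ):ℝ) * (1-θ)) * c ^ (1-θ) ≠ 0)]
  have e2 : θ + ((2:ℕ):ℝ) * (1-θ) = r := by rw [hr]; push_cast; ring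
  have e3 : θ - 1 + (1-θ) = 0 := by ring
  calc E ^ θ * c ^ (θ-1) * (E ^ (((2:ℕ):ℝ)*(1-θ)) * c ^ (1-θ))
      = (E ^ θ * E ^ (((2:ℕ):ℝ)*(1-θ))) * (c ^ (θ-1) * c ^ (1-θ)) := by ring
    _ = E ^ r := by
        rw [← Real.rpow_add hE, ← Real.rpow_add hc, e2, e3, Real.rpow_zero, mul_one]

lemma aux_bernoulli {β s : ℝ} (hβ : 0 ≤ β) (hs0 : 0 ≤ s) (hs1 : s ≤ 1) :
    1 - s * β ≤ (1 + β) ^ (-s : ℝ) := by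
  have hb1 : (0:ℝ) < 1 + β := by linarith
  have h1 : (1+β) ^ (s:ℝ) ≤ 1 + s*β :=
    rpow_one_add_le_one_add_mul_self (by linarith : (-1:ℝ) ≤ β) hs0 hs1
  have hpos : (0:ℝ) < (1+β) ^ (s:ℝ) := Real.rpow_pos_of_pos hb1 _
  have h2 : (1+β) ^ (-s:ℝ) = ((1+β) ^ (s:ℝ))⁻¹ := Real.rpow_neg hb1.le s
  rw [h2]
  rcases le_or_gt (1 - s*β) 0 with h | h
  · exact h.trans (inv_pos.mpr hpos).le
  · rw [← one_div, le_div_iff₀ hpos]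
    nlinarith [mul_nonneg hs0 hβ]

lemma aux_moment_ratio {p : ℝ} (hp : 1 ≤ p) :
    ∫ x, |x| ^ (2*p) ∂(gaussianReal 0 1)
      ≤ (1 + 2 ^ (p+1)) * (∫ x, |x| ^ p ∂(gaussianReal 0 1)) ^ 2 := by
  have hp0 : (0:ℝ) < p := by linarith
  rw [aux_gaussian_moment (by linarith : (0:ℝ) ≤ 2*p),
    aux_gaussian_moment (by linarith : (0:ℝ) ≤ p)]
  have hπ : (0:ℝ) < Real.sqrt π := Real.sqrt_pos.mpr Real.pi_pos
  have e1 : (2:ℝ) ^ (2*p/2 : ℝ) = 2 ^ (p:ℝ) := by congr 1; ring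
  have e2 : (2*p+1)/2 = p + 1/2 := by ring
  have e3 : ((2:ℝ) ^ (p/2:ℝ)) ^ (2:ℕ) = 2 ^ (p:ℝ) := by
    rw [← Real.rpow_natCast ((2:ℝ) ^ (p/2:ℝ)) 2, ← Real.rpow_mul (by norm_num : (0:ℝ) ≤ 2)]
    norm_num
  rw [e1, e2, div_pow, mul_pow, e3]
  have key := aux_Gamma_ratio hp
  have h2p : (0:ℝ) < 2 ^ (p:ℝ) := Real.rpow_pos_of_pos two_pos _
  have hG : (0:ℝ) < Real.Gamma ((p+1)/2) := Real.Gamma_pos_of_pos (by linarith)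
  have hA : (0:ℝ) < Real.Gamma (p + 1/2) := Real.Gamma_pos_of_pos (by linarith)
  have hsq : Real.sqrt π ^ (2:ℕ) = Real.sqrt π * Real.sqrt π := sq (Real.sqrt π)
  calc 2 ^ (p:ℝ) * Real.Gamma (p + 1/2) / Real.sqrt π
      = 2 ^ (p:ℝ) * (Real.Gamma (p + 1/2) * Real.sqrt π) / (Real.sqrt π ^ (2:ℕ)) := by
        rw [hsq, div_eq_div_iff hπ.ne' (by positivity : Real.sqrt π * Real.sqrt π ≠ 0)]
        ring
    _ ≤ 2 ^ (p:ℝ) * ((1 + 2 ^ (p+1)) * Real.Gamma ((p+1)/2) ^ 2) / (Real.sqrt π ^ (2:ℕ)) := by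
        apply div_le_div_of_nonneg_right ?_ (by positivity)
        exact mul_le_mul_of_nonneg_left key h2p.le
    _ = (1 + 2 ^ (p+1)) * (2 ^ (p:ℝ) * Real.Gamma ((p+1)/2) ^ 2 / Real.sqrt π ^ (2:ℕ)) := by
        ring

lemma aux_main {Ω : Type*} [MeasurableSpace Ω] (P : Measure Ω) [IsProbabilityMeasure P]
    {θ : ℝ} (hθ0 : 0 < θ) (hθ1 : θ < 1)
    {Z : Ω → ℝ} (hZnn : ∀ ω, 0 ≤ Z ω) (hZmeas : Measurable Z)
    (hZint : Integrable Z P) (hZZint : Integrable (fun ω => Z ω * Z ω) P)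
    {E c : ℝ} (hE : ∫ ω, Z ω ∂P = E) (hEpos : 0 < E) (hcpos : 0 < c)
    (hQ : ∫ ω, Z ω * Z ω ∂P ≤ E^2 * c) :
    E ^ θ * c ^ (θ - 1) ≤ ∫ ω, Z ω ^ θ ∂P := by
  have hr : (0:ℝ) < 2 - θ := by linarith
  have hr' : (0:ℝ) < (2-θ)/(1-θ) := div_pos (by linarith) (by linarith)
  have hconj : Real.HolderConjugate (2-θ) ((2-θ)/(1-θ)) := by
    constructor
    · rw [inv_div, inv_one, inv_eq_one_div, ← add_div, show 1 + (1-θ) = 2-θ by ring,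
        div_self hr.ne']
    · linarith
    · exact hr'
  have hZsm : AEStronglyMeasurable Z P := hZmeas.aestronglyMeasurable
  have hZmem2 : MemLp Z 2 P := by
    rw [memLp_two_iff_integrable_sq hZsm]
    have : (fun x => Z x ^ (2:ℕ)) = fun ω => Z ω * Z ω := by funext x; rw [sq]
    rwa [this]
  have hZmemθ : MemLp Z (ENNReal.ofReal θ) P := by
    refine (memLp_one_iff_integrable.mpr hZint).mono_exponent ?_
    exact ENNReal.ofReal_le_one.mpr (by linarith)
  have habsZ : (fun ω => ‖Z ω‖) = Z := by
    funext ω; rw [Real.norm_eq_abs, abs_of_nonneg (hZnn ω)]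
  have hfmem : MemLp (fun ω => Z ω ^ (θ/(2-θ))) (ENNReal.ofReal (2-θ)) P := by
    have hq0 : (0:ℝ) < θ/(2-θ) := div_pos hθ0 hr
    have h := (memLp_norm_rpow_iff (q := ENNReal.ofReal (θ/(2-θ))) (p := ENNReal.ofReal θ) hZsm
      (by simp [ENNReal.ofReal_eq_zero, not_le, hq0]) ENNReal.ofReal_ne_top).mpr hZmemθ
    have ht : (ENNReal.ofReal (θ/(2-θ))).toReal = θ/(2-θ) := ENNReal.toReal_ofReal hq0.le
    have hdiv : ENNReal.ofReal θ / ENNReal.ofReal (θ/(2-θ)) = ENNReal.ofReal (2-θ) := by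
      rw [← ENNReal.ofReal_div_of_pos hq0]
      congr 1
      field_simp
    rw [ht, hdiv] at h
    have heq : (fun x => ‖Z x‖ ^ (θ/(2-θ))) = fun ω => Z ω ^ (θ/(2-θ)) := by
      funext ω; rw [Real.norm_eq_abs, abs_of_nonneg (hZnn ω)]
    rwa [heq] at h
  have hgmem : MemLp (fun ω => Z ω ^ ((2-2*θ)/(2-θ))) (ENNReal.ofReal ((2-θ)/(1-θ))) P := by
    have hq0 : (0:ℝ) < (2-2*θ)/(2-θ) := div_pos (by linarith) hr
    have h := (memLp_norm_rpow_iff (q := ENNReal.ofReal ((2-2*θ)/(2-θ))) (p := (2:ℝ≥0∞)) hZsm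
      (by simp [ENNReal.ofReal_eq_zero, not_le, hq0]) ENNReal.ofReal_ne_top).mpr hZmem2
    have ht : (ENNReal.ofReal ((2-2*θ)/(2-θ))).toReal = (2-2*θ)/(2-θ) :=
      ENNReal.toReal_ofReal hq0.le
    have hdiv : (2:ℝ≥0∞) / ENNReal.ofReal ((2-2*θ)/(2-θ)) = ENNReal.ofReal ((2-θ)/(1-θ)) := by
      rw [show (2:ℝ≥0∞) = ENNReal.ofReal (2:ℝ) by simp]
      rw [← ENNReal.ofReal_div_of_pos hq0]
      congr 1
      have hne1 : (2:ℝ) - θ ≠ 0 := hr.ne'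
      have hne2 : (1:ℝ) - θ ≠ 0 := ne_of_gt (by linarith)
      have hne3 : (2:ℝ) - θ * 2 ≠ 0 := ne_of_gt (by linarith)
      have hne4 : (2:ℝ) - 2 * θ ≠ 0 := ne_of_gt (by linarith)
      field_simp
    rw [ht, hdiv] at h
    have heq : (fun x => ‖Z x‖ ^ ((2-2*θ)/(2-θ))) = fun ω => Z ω ^ ((2-2*θ)/(2-θ)) := by
      funext ω; rw [Real.norm_eq_abs, abs_of_nonneg (hZnn ω)]
    rwa [heq] at h
  have hH := integral_mul_le_Lp_mul_Lq_of_nonneg hconj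
    (ae_of_all _ fun ω => Real.rpow_nonneg (hZnn ω) (θ/(2-θ)))
    (ae_of_all _ fun ω => Real.rpow_nonneg (hZnn ω) ((2-2*θ)/(2-θ))) hfmem hgmem
  have hsum : θ/(2-θ) + (2-2*θ)/(2-θ) = 1 := by
    rw [← add_div, show θ + (2-2*θ) = 2-θ by ring, div_self hr.ne']
  have hL : ∫ ω, Z ω ^ (θ/(2-θ)) * Z ω ^ ((2-2*θ)/(2-θ)) ∂P = E := by
    rw [← hE]
    refine congrArg (integral P) (funext fun ω => ?_)
    rw [← Real.rpow_add' (hZnn ω) (by rw [hsum]; norm_num), hsum, Real.rpow_one]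
  have hR1 : ∫ ω, (Z ω ^ (θ/(2-θ))) ^ (2-θ) ∂P = ∫ ω, Z ω ^ θ ∂P := by
    refine congrArg (integral P) (funext fun ω => ?_)
    rw [← Real.rpow_mul (hZnn ω), div_mul_cancel₀ _ hr.ne']
  have hR2 : ∫ ω, (Z ω ^ ((2-2*θ)/(2-θ))) ^ ((2-θ)/(1-θ)) ∂P = ∫ ω, Z ω * Z ω ∂P := by
    refine congrArg (integral P) (funext fun ω => ?_)
    rw [← Real.rpow_mul (hZnn ω)]
    have hne2 : (1:ℝ) - θ ≠ 0 := ne_of_gt (by linarith)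
    have he : (2-2*θ)/(2-θ) * ((2-θ)/(1-θ)) = 2 := by
      field_simp
    rw [he, show (2:ℝ) = ((2:ℕ):ℝ) by norm_num, Real.rpow_natCast, sq]
  rw [hL, hR1, hR2] at hH
  exact aux_holder_arith hEpos
    (integral_nonneg fun ω => Real.rpow_nonneg (hZnn ω) θ)
    (integral_nonneg fun ω => mul_self_nonneg _) hcpos hθ0 hθ1 hH hQ

/-- For a standard Gaussian random vector `ξ ∈ ℝ^m` and `1 ≤ p < ∞`,
`E‖ξ‖_p ≥ (E‖ξ‖_p^p)^(1/p) (1 + 2^(p+1)/m)^(1/p - 1)`.  In particular, if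
`m β ≥ 2^(p+1)` for some `β ≥ 0` (i.e. `m ≥ β⁻¹ 2^(p+1)`), then
`E‖ξ‖_p ≥ (E‖ξ‖_p^p)^(1/p) (1+β)^(1/p-1) ≥ (E‖ξ‖_p^p)^(1/p) (1 - ((p-1)/p)β)`. -/
theorem gaussian_expect_pnorm_ge
    {Ω : Type*} [MeasurableSpace Ω] (P : Measure Ω) [IsProbabilityMeasure P]
    (m : ℕ) (hm : 0 < m) (p : ℝ) (hp : 1 ≤ p)
    (ξ : Ω → Fin m → ℝ)
    (hmeas : ∀ i, Measurable fun ω => ξ ω i)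
    (hindep : iIndepFun (fun i ω => ξ ω i) P)
    (hgauss : ∀ i, Measure.map (fun ω => ξ ω i) P = gaussianReal 0 1) :
    (∫ ω, ∑ i, |ξ ω i| ^ p ∂P) ^ (1 / p) * (1 + 2 ^ (p + 1) / m) ^ (1 / p - 1)
      ≤ ∫ ω, (∑ i, |ξ ω i| ^ p) ^ (1 / p) ∂P ∧
    ∀ β : ℝ, 0 ≤ β → 2 ^ (p + 1) ≤ β * m →
      (∫ ω, ∑ i, |ξ ω i| ^ p ∂P) ^ (1 / p) * (1 + β) ^ (1 / p - 1)
          ≤ ∫ ω, (∑ i, |ξ ω i| ^ p) ^ (1 / p) ∂P ∧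
      (∫ ω, ∑ i, |ξ ω i| ^ p ∂P) ^ (1 / p) * (1 - (p - 1) / p * β)
          ≤ (∫ ω, ∑ i, |ξ ω i| ^ p ∂P) ^ (1 / p) * (1 + β) ^ (1 / p - 1) := by
  have hp0 : (0:ℝ) < p := lt_of_lt_of_le one_pos hp
  have hm' : (0:ℝ) < (m:ℝ) := Nat.cast_pos.mpr hm
  have h2p1 : (0:ℝ) < 2 ^ (p+1 : ℝ) := Real.rpow_pos_of_pos two_pos _
  have hcpos : (0:ℝ) < 1 + 2 ^ (p+1 : ℝ) / (m:ℝ) := by positivity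
  -- transfer lemmas
  have hgm : Measurable (fun x : ℝ => |x| ^ p) :=
    Measurable.pow measurable_abs measurable_const
  have hint : ∀ (q : ℝ), 0 ≤ q → ∀ i, Integrable (fun ω => |ξ ω i| ^ q) P := by
    intro q hq i
    have h0 : Integrable (fun x : ℝ => |x| ^ q) (Measure.map (fun ω => ξ ω i) P) := by
      rw [hgauss i]; exact aux_gaussian_integrable hq
    exact (integrable_map_measure
      ((Measurable.pow measurable_abs measurable_const).aestronglyMeasurable)
      (hmeas i).aemeasurable).mp h0
  have hval : ∀ (q : ℝ) (i : Fin m),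
      ∫ ω, |ξ ω i| ^ q ∂P = ∫ x, |x| ^ q ∂(gaussianReal 0 1) := by
    intro q i
    have h := integral_map (hmeas i).aemeasurable
      ((Measurable.pow measurable_abs measurable_const).aestronglyMeasurable
        : AEStronglyMeasurable (fun x : ℝ => |x| ^ q) (Measure.map (fun ω => ξ ω i) P))
    rw [hgauss i] at h
    exact h.symm
  set μ1 : ℝ := ∫ x, |x| ^ p ∂(gaussianReal 0 1) with hμ1def
  have hμ1pos : 0 < μ1 := by
    rw [hμ1def, aux_gaussian_moment hp0.le]
    have h1 : 0 < Real.Gamma ((p+1)/2) := Real.Gamma_pos_of_pos (by linarith)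
    have h2 : 0 < Real.sqrt π := Real.sqrt_pos.mpr Real.pi_pos
    positivity
  have hpt : ∀ x : ℝ, |x| ^ (2*p) = |x| ^ p * |x| ^ p := by
    intro x
    rw [two_mul, Real.rpow_add' (abs_nonneg x) (by positivity)]
  have hWint : ∀ i, Integrable (fun ω => |ξ ω i| ^ p) P := hint p hp0.le
  have hW2int : ∀ i, Integrable (fun ω => |ξ ω i| ^ p * |ξ ω i| ^ p) P := by
    intro i
    exact (hint (2*p) (by linarith) i).congr (ae_of_all _ fun ω => hpt (ξ ω i))
  have hWindep : ∀ i j, i ≠ j →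
      IndepFun (fun ω => |ξ ω i| ^ p) (fun ω => |ξ ω j| ^ p) P := by
    intro i j hij
    exact (hindep.indepFun hij).comp hgm hgm
  -- Z facts
  have hZnn : ∀ ω, 0 ≤ ∑ i, |ξ ω i| ^ p :=
    fun ω => Finset.sum_nonneg fun i _ => Real.rpow_nonneg (abs_nonneg _) _
  have hZmeas : Measurable (fun ω => ∑ i, |ξ ω i| ^ p) :=
    Finset.measurable_sum _ fun i _ => Measurable.pow (hmeas i).abs measurable_const
  have hZint : Integrable (fun ω => ∑ i, |ξ ω i| ^ p) P :=
    integrable_finset_sum _ fun i _ => hWint i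
  have hEZ : ∫ ω, ∑ i, |ξ ω i| ^ p ∂P = (m:ℝ) * μ1 := by
    rw [integral_finset_sum _ fun i _ => hWint i]
    rw [Finset.sum_congr rfl fun i _ => hval p i]
    rw [Finset.sum_const, Finset.card_univ, Fintype.card_fin, nsmul_eq_mul]
  have hEZpos : (0:ℝ) < (m:ℝ) * μ1 := by positivity
  have hZZ : (fun ω => (∑ i, |ξ ω i| ^ p) * (∑ i, |ξ ω i| ^ p))
      = fun ω => ∑ i, ∑ j, |ξ ω i| ^ p * |ξ ω j| ^ p := by
    funext ω
    exact Finset.sum_mul_sum _ _ _ _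
  have hprodint : ∀ i j : Fin m, Integrable (fun ω => |ξ ω i| ^ p * |ξ ω j| ^ p) P := by
    intro i j
    by_cases hij : i = j
    · subst hij; exact hW2int i
    · exact (hWindep i j hij).integrable_mul (hWint i) (hWint j)
  have hZZint : Integrable (fun ω => (∑ i, |ξ ω i| ^ p) * (∑ i, |ξ ω i| ^ p)) P := by
    rw [hZZ]
    exact integrable_finset_sum _ fun i _ =>
      integrable_finset_sum _ fun j _ => hprodint i j
  have hterm : ∀ i j : Fin m, ∫ ω, |ξ ω i| ^ p * |ξ ω j| ^ p ∂P
      ≤ μ1^2 + (if i = j then 2 ^ (p+1:ℝ) * μ1^2 else 0) := by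
    intro i j
    by_cases hij : i = j
    · subst hij
      rw [if_pos rfl]
      have he : ∫ ω, |ξ ω i| ^ p * |ξ ω i| ^ p ∂P = ∫ ω, |ξ ω i| ^ (2*p) ∂P :=
        congrArg (integral P) (funext fun ω => (hpt (ξ ω i)).symm)
      rw [he, hval (2*p) i]
      have hr := aux_moment_ratio hp
      rw [← hμ1def] at hr
      nlinarith [hr]
    · rw [if_neg hij]
      have he := (hWindep i j hij).integral_mul_eq_mul_integral (hWint i).aestronglyMeasurable
        (hWint j).aestronglyMeasurable
      have he2 : ∫ ω, |ξ ω i| ^ p * |ξ ω j| ^ p ∂P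
          = (∫ ω, |ξ ω i| ^ p ∂P) * ∫ ω, |ξ ω j| ^ p ∂P := he
      rw [he2, hval p i, hval p j, ← hμ1def]
      nlinarith
  have hQle : ∫ ω, (∑ i, |ξ ω i| ^ p) * (∑ i, |ξ ω i| ^ p) ∂P
      ≤ ((m:ℝ) * μ1)^2 * (1 + 2 ^ (p+1:ℝ) / (m:ℝ)) := by
    rw [hZZ, integral_finset_sum _ (fun i (_ : i ∈ Finset.univ) =>
      integrable_finset_sum _ fun j _ => hprodint i j)]
    have hsum1 : ∀ i : Fin m, ∫ ω, ∑ j, |ξ ω i| ^ p * |ξ ω j| ^ p ∂P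
        = ∑ j, ∫ ω, |ξ ω i| ^ p * |ξ ω j| ^ p ∂P :=
      fun i => integral_finset_sum _ fun j _ => hprodint i j
    rw [Finset.sum_congr rfl fun i _ => hsum1 i]
    have hstep : ∑ i : Fin m, ∑ j : Fin m, (∫ ω, |ξ ω i| ^ p * |ξ ω j| ^ p ∂P)
        ≤ ∑ i : Fin m, ∑ j : Fin m, (μ1^2 + if i = j then 2 ^ (p+1:ℝ) * μ1^2 else 0) :=
      Finset.sum_le_sum fun i _ => Finset.sum_le_sum fun j _ => hterm i j
    refine hstep.trans (le_of_eq ?_)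
    have hinner : ∀ i : Fin m, ∑ j : Fin m, (μ1^2 + if i = j then 2 ^ (p+1:ℝ) * μ1^2 else 0)
        = (m:ℝ) * μ1^2 + 2 ^ (p+1:ℝ) * μ1^2 := by
      intro i
      rw [Finset.sum_add_distrib, Finset.sum_const, Finset.card_univ, Fintype.card_fin,
        nsmul_eq_mul, Finset.sum_ite_eq]
      simp
    rw [Finset.sum_congr rfl fun i _ => hinner i, Finset.sum_const, Finset.card_univ,
      Fintype.card_fin, nsmul_eq_mul]
    field_simp
  -- main inequality
  have main : (∫ ω, ∑ i, |ξ ω i| ^ p ∂P) ^ (1 / p) * (1 + 2 ^ (p + 1) / m) ^ (1 / p - 1)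
      ≤ ∫ ω, (∑ i, |ξ ω i| ^ p) ^ (1 / p) ∂P := by
    rcases eq_or_lt_of_le hp with hp1 | hp1
    · rw [← hp1]
      simp only [show (1:ℝ)/1 = 1 from by norm_num, sub_self, Real.rpow_zero, mul_one,
        Real.rpow_one]
      exact le_rfl
    · have hθ0 : (0:ℝ) < 1/p := by positivity
      have hθ1 : (1:ℝ)/p < 1 := by rw [div_lt_one hp0]; exact hp1
      have h := aux_main P hθ0 hθ1 hZnn hZmeas hZint hZZint hEZ hEZpos hcpos hQle
      rw [hEZ]
      exact h
  refine ⟨main, fun β hβ hβm => ?_⟩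
  have hTnn : 0 ≤ (∫ ω, ∑ i, |ξ ω i| ^ p ∂P) ^ ((1:ℝ) / p) :=
    Real.rpow_nonneg (integral_nonneg fun ω => hZnn ω) _
  have hexp_le : (1:ℝ)/p - 1 ≤ 0 := by
    have : (1:ℝ)/p ≤ 1 := by rw [div_le_one hp0]; exact hp
    linarith
  have hc_le : 1 + 2 ^ (p+1:ℝ) / (m:ℝ) ≤ 1 + β := by
    have : 2 ^ (p+1:ℝ) / (m:ℝ) ≤ β := by
      rw [div_le_iff₀ hm']
      linarith [hβm]
    linarith
  have h1 : (1+β) ^ ((1:ℝ)/p - 1) ≤ (1 + 2 ^ (p+1:ℝ) / (m:ℝ)) ^ ((1:ℝ)/p - 1) :=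
    Real.rpow_le_rpow_of_nonpos hcpos hc_le hexp_le
  constructor
  · exact le_trans (mul_le_mul_of_nonneg_left h1 hTnn) main
  · have hs0 : 0 ≤ (p-1)/p := div_nonneg (by linarith) hp0.le
    have hs1 : (p-1)/p ≤ 1 := by rw [div_le_one hp0]; linarith
    have hB := aux_bernoulli hβ hs0 hs1
    have hexp : -((p-1)/p) = 1/p - 1 := by field_simp; ring
    rw [hexp] at hB
    exact mul_le_mul_of_nonneg_left hB hTnn
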